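/- The set of P_1-stack configurations of a permutation σ is exactly the set of pushall stack configurations of σ^{(1)}. -/

import Mathlib

/-- The three stack operations: `ρ` (push the next input element onto `H`),
`λ` (move the top of `H` onto the top of `V`), `μ` (pop the top of `V` to the output). -/
inductive Op : Type
  | push : Op
  | lam : Op
  | mu : Op
  deriving DecidableEq

/-- A full machine configuration: remaining input, stack `H`, stack `V`
(both stacks have their top at the head of the list), and the output so far. -/
structure Conf : Type where
  input : List ℤ
  H : List ℤ
  V : List ℤ
  output : List ℤ
  deriving DecidableEq

/-- One machine step (`none` if the operation is impossible). -/
def stepOp : Op → Conf → Option Conf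
  | Op.push, ⟨x :: inp, h, v, out⟩ => some ⟨inp, x :: h, v, out⟩
  | Op.lam, ⟨inp, x :: h, v, out⟩ => some ⟨inp, h, x :: v, out⟩
  | Op.mu, ⟨inp, h, x :: v, out⟩ => some ⟨inp, h, v, out ++ [x]⟩
  | _, _ => none

/-- Run a word of operations from a configuration. -/
def runOps : List Op → Conf → Option Conf
  | [], c => some c
  | o :: w, c => (stepOp o c).bind (runOps w)

/-- Initial configuration with input `σ`, empty stacks and empty output. -/
def initConf (σ : List ℤ) : Conf := ⟨σ, [], [], []⟩

/-- Number of occurrences of the letter `o` in the word `w`. -/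
def countOp (w : List Op) (o : Op) : ℕ := (w.filter (fun o' => decide (o' = o))).length

/-- A stack word: every prefix `v` satisfies `|v|_ρ ≥ |v|_λ ≥ |v|_μ`. -/
def IsStackWord (w : List Op) : Prop :=
  ∀ v : List Op, v <+: w →
    countOp v Op.mu ≤ countOp v Op.lam ∧ countOp v Op.lam ≤ countOp v Op.push

/-- A sorting word: a stack word with `|w|_ρ = |w|_λ = |w|_μ`. -/
def IsSortingWord (w : List Op) : Prop :=
  IsStackWord w ∧ countOp w Op.push = countOp w Op.lam ∧ countOp w Op.lam = countOp w Op.mu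

/-- `w` is a sorting word for `σ`: applied to input `σ` it empties everything
and outputs the elements of `σ` in increasing order. -/
def SortsTo (σ : List ℤ) (w : List Op) : Prop :=
  ∃ out : List ℤ, runOps w (initConf σ) = some ⟨[], [], [], out⟩ ∧
    out.Pairwise (· < ·) ∧ out.Perm σ

/-- `σ` is 2-stack sortable. -/
def Sortable (σ : List ℤ) : Prop := ∃ w : List Op, SortsTo σ w

/-- A stack configuration `(V, H)`; each list has the top of the stack at its head
(so the bottom-to-top reading is the reverse of the list). -/
structure SConf : Type where
  V : List ℤ
  H : List ℤ
  deriving DecidableEq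

/-- The elements of a stack configuration. -/
def SConf.elems (c : SConf) : List ℤ := c.V ++ c.H

/-- A stack configuration is poppable if its elements can all be output in
increasing order using only operations `λ` and `μ`. -/
def Poppable (c : SConf) : Prop :=
  ∃ (w : List Op) (out : List ℤ), Op.push ∉ w ∧
    runOps w ⟨[], c.H, c.V, []⟩ = some ⟨[], [], [], out⟩ ∧ out.Pairwise (· < ·)

/-- `c` is the stack configuration reached after performing `w` with input `σ`
(i.e. `c = c_σ(w)`). -/
def ReachesConf (σ : List ℤ) (w : List Op) (c : SConf) : Prop :=
  ∃ inp out : List ℤ, runOps w (initConf σ) = some ⟨inp, c.H, c.V, out⟩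

/-- A stack configuration is reachable for `σ` if it equals `c_σ(w)` for some stack word `w`. -/
def Reachable (σ : List ℤ) (c : SConf) : Prop :=
  ∃ w : List Op, IsStackWord w ∧ ReachesConf σ w c

/-- A total stack configuration of `σ`: its elements are exactly those of `σ`. -/
def TotalFor (σ : List ℤ) (c : SConf) : Prop := c.elems.Perm σ

/-- A pushall stack configuration of `σ`: poppable, total and reachable for `σ`. -/
def IsPushall (σ : List ℤ) (c : SConf) : Prop :=
  Poppable c ∧ TotalFor σ c ∧ Reachable σ c

/-- The decorated word of `w` started from a configuration: each letter is labelled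
with the element it acts on. -/
def decorate : List Op → Conf → Option (List (Op × ℤ))
  | [], _ => some []
  | Op.push :: w, ⟨x :: inp, h, v, out⟩ =>
      (decorate w ⟨inp, x :: h, v, out⟩).map (fun l => (Op.push, x) :: l)
  | Op.lam :: w, ⟨inp, x :: h, v, out⟩ =>
      (decorate w ⟨inp, h, x :: v, out⟩).map (fun l => (Op.lam, x) :: l)
  | Op.mu :: w, ⟨inp, h, x :: v, out⟩ =>
      (decorate w ⟨inp, h, v, out ++ [x]⟩).map (fun l => (Op.mu, x) :: l)
  | _ :: _, _ => none

/-- The restriction `w_{|I}` of a decorated word: keep exactly the letters acting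
on elements of `I`, then forget the labels. -/
def restrictWord (dw : List (Op × ℤ)) (I : Finset ℤ) : List Op :=
  (dw.filter (fun p => decide (p.2 ∈ I))).map Prod.fst

/-- `Bs` is a decomposition of `τ` into (nonempty, contiguous) blocks whose values
decrease from one block to the next. -/
def IsDecBlocks (τ : List ℤ) (Bs : List (List ℤ)) : Prop :=
  τ = Bs.flatten ∧ (∀ B ∈ Bs, B ≠ []) ∧
    Bs.Pairwise (fun B B' => ∀ x ∈ B, ∀ y ∈ B', y < x)

/-- `τ` is `⊖`-indecomposable. -/
def MinusIndecomposable (τ : List ℤ) : Prop :=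
  τ ≠ [] ∧ ∀ Bs : List (List ℤ), IsDecBlocks τ Bs → Bs.length ≤ 1

/-- `Bs` is the `⊖`-decomposition of `τ`: a decomposition into decreasing blocks,
each of which is `⊖`-indecomposable. -/
def IsMinusDecomposition (τ : List ℤ) (Bs : List (List ℤ)) : Prop :=
  IsDecBlocks τ Bs ∧ ∀ B ∈ Bs, MinusIndecomposable B

/-- `k` (0-based) is the position of a right-to-left minimum of `σ`:
no later entry is smaller. -/
def IsRTLMinPos (σ : List ℤ) (k : ℕ) : Prop :=
  k < σ.length ∧ ∀ j, j < σ.length → k < j → ¬ (σ.getD j 0 < σ.getD k 0)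

instance (σ : List ℤ) : DecidablePred (IsRTLMinPos σ) := fun k => by
  unfold IsRTLMinPos; infer_instance

/-- The (increasing) list of positions of the right-to-left minima of `σ`. -/
def rtlPositions (σ : List ℤ) : List ℕ :=
  (List.range σ.length).filter (fun k => decide (IsRTLMinPos σ k))

/-- The number `r` of right-to-left minima of `σ`. -/
def rtlCount (σ : List ℤ) : ℕ := (rtlPositions σ).length

/-- The 0-based position `k_i` of the `i`-th right-to-left minimum of `σ` (`i` is 1-based). -/
def rtlPos (σ : List ℤ) (i : ℕ) : ℕ := (rtlPositions σ).getD (i - 1) 0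

/-- `σ^{(i)}`: the elements `σ_j` with `j < k_i` and `σ_j > σ_{k_i}`, in the order of `σ`. -/
def sigmaUp (σ : List ℤ) (i : ℕ) : List ℤ :=
  (σ.take (rtlPos σ i)).filter (fun x => decide (σ.getD (rtlPos σ i) 0 < x))

/-- `A^{(i)}`: the elements `σ_j` with `j < k_i` and `σ_j > σ_{k_{i+1}}`, in the order of `σ`. -/
def commonA (σ : List ℤ) (i : ℕ) : List ℤ :=
  (σ.take (rtlPos σ i)).filter (fun x => decide (σ.getD (rtlPos σ (i + 1)) 0 < x))

/-- The letter `u` occurs (strictly) before the letter `v` in the decorated word `dw`. -/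
def Before (dw : List (Op × ℤ)) (u v : Op × ℤ) : Prop :=
  ∃ d1 d2 d3 : List (Op × ℤ), dw = d1 ++ u :: d2 ++ v :: d3

/-- The decorated word `dw` (of a sorting word of `σ`) satisfies property `(P_i)`
(`i` is 1-based). -/
def SatisfiesP (σ : List ℤ) (dw : List (Op × ℤ)) (i : ℕ) : Prop :=
  (∃ d1 d2 : List (Op × ℤ),
      dw = d1 ++ (Op.push, σ.getD (rtlPos σ i) 0) :: (Op.lam, σ.getD (rtlPos σ i) 0)
        :: (Op.mu, σ.getD (rtlPos σ i) 0) :: d2) ∧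
  (∀ x ∈ σ, x < σ.getD (rtlPos σ i) 0 →
      Before dw (Op.mu, x) (Op.push, σ.getD (rtlPos σ i) 0)) ∧
  (i < rtlCount σ →
    ∀ (Bs : List (List ℤ)) (p : ℕ) (m : ℤ),
      IsMinusDecomposition (sigmaUp σ i) Bs →
      m ∈ commonA σ i → (∀ y ∈ commonA σ i, m ≤ y) →
      p < Bs.length → m ∈ Bs.getD p [] →
      ∀ (x : ℤ) (j : ℕ), p < j → j < Bs.length → x ∈ Bs.getD j [] →
        Before dw (Op.mu, x) (Op.push, σ.getD (rtlPos σ i + 1) 0))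

/-- An extended stack configuration `(c, i)` of `σ`: here `i` is the number of input
elements already consumed (the paper's index minus one), `c` is poppable and consists
of all elements among the first `i` ones that are greater than some value `p`. -/
def IsExtConf (σ : List ℤ) (c : SConf) (i : ℕ) : Prop :=
  i ≤ σ.length ∧ Poppable c ∧ c.elems.Nodup ∧
    ∃ p : ℤ, ∀ x : ℤ, x ∈ c.elems ↔ (x ∈ σ.take i ∧ p < x)

/-- `(c', j)` is accessible from `(c, i)` for `σ`: starting from stacks `c` with input
`σ_{i+1} … σ_n` remaining, some sequence of operations reaches stacks `c'` with input
`σ_{j+1} … σ_n` remaining, the `μ` operations outputting elements in increasing order. -/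
def AccessibleFrom (σ : List ℤ) (c : SConf) (i : ℕ) (c' : SConf) (j : ℕ) : Prop :=
  ∃ (w : List Op) (out : List ℤ),
    runOps w ⟨σ.drop i, c.H, c.V, []⟩ = some ⟨σ.drop j, c'.H, c'.V, out⟩ ∧
    out.Pairwise (· < ·)

/-- A `P_i`-stack configuration of `σ`: a configuration `c_{σ_{≤k_i}}(w)` such that for
some word `u` whose first letter is the push of `σ_{k_i}`, `w ++ u` is a sorting word of
`σ_{≤k_i}` satisfying `(P_ℓ)` for all `ℓ` from 1 to `i`. -/
def PiConfig (σ : List ℤ) (i : ℕ) (c : SConf) : Prop :=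
  ∃ (w u : List Op) (dw : List (Op × ℤ)),
    u.head? = some Op.push ∧
    countOp w Op.push = rtlPos σ i ∧
    ReachesConf (σ.take (rtlPos σ i + 1)) w c ∧
    SortsTo (σ.take (rtlPos σ i + 1)) (w ++ u) ∧
    decorate (w ++ u) (initConf (σ.take (rtlPos σ i + 1))) = some dw ∧
    ∀ l, 1 ≤ l → l ≤ i → SatisfiesP (σ.take (rtlPos σ i + 1)) dw l

/-- The restriction `c_{|I}` of a stack configuration to the elements of `I`. -/
def restrictConf (c : SConf) (I : List ℤ) : SConf :=
  ⟨c.V.filter (fun x => decide (x ∈ I)), c.H.filter (fun x => decide (x ∈ I))⟩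

/-- The restriction `σ_{|I}` of a list to the elements of `I`. -/
def restrictList (τ I : List ℤ) : List ℤ := τ.filter (fun x => decide (x ∈ I))

/-- Stack `H` (top at head, i.e. bottom-to-top is the reverse) contains the pattern `132`. -/
def HasPattern132 (H : List ℤ) : Prop :=
  ∃ x y z : ℤ, List.Sublist [x, y, z] H.reverse ∧ x < z ∧ z < y

/-- Stack `V` contains the pattern `12` (bottom to top). -/
def HasPattern12 (V : List ℤ) : Prop :=
  ∃ x y : ℤ, List.Sublist [x, y] V.reverse ∧ x < y

/-- The stacks `(V,H)` contain the pattern `|2|13|`: an element `i` of `V` and elements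
`j, k` of `H`, with `j` below `k` in `H`, such that `j < i < k`. -/
def HasPattern2_13 (c : SConf) : Prop :=
  ∃ i ∈ c.V, ∃ j k : ℤ, List.Sublist [j, k] c.H.reverse ∧ j < i ∧ i < k

/-- `y` occurs (strictly) above `x` in the stack `L` (top of stack at the head). -/
def AboveIn (L : List ℤ) (y x : ℤ) : Prop :=
  ∃ (a b : ℕ) (ha : a < L.length) (hb : b < L.length),
    a < b ∧ L.get ⟨a, ha⟩ = y ∧ L.get ⟨b, hb⟩ = x

/-- The increasing list of integers `i, i+1, …, j`. -/
def intRange (i j : ℤ) : List ℤ := (List.range (j + 1 - i).toNat).map (fun t => i + t)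

/-- The decreasing permutation `n (n-1) … 2 1`. -/
def decPerm (n : ℕ) : List ℤ := (List.range n).map (fun t => (n - t : ℤ))

/-! Since `σ_{k₁}` is the minimum of `σ`, the prefix `σ_{≤k₁}` is `σ^{(1)}` followed by
`m = σ_{k₁}`, its only right-to-left minimum, so `(P₁)` just asks for the factor `ρ_m λ_m μ_m`.
A word `w` with `c = c_σ(w)` pushes exactly the entries of `σ^{(1)}`, so that factor starts the
completing word `u`: `m` is output first, hence nothing is output by `w`, `c` holds all of
`σ^{(1)}`, and the rest of `u` empties `c` in increasing order. Conversely, if `w` reaches a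
pushall configuration of `σ^{(1)}` that `v` empties, then `w ρ λ μ v` sorts `σ_{≤k₁}`. -/

theorem List.eq_nil_of_pairwise_lt_append_cons {α : Type*} [Preorder α] {l₁ l₂ : List α} {m : α}
    (h : (l₁ ++ m :: l₂).Pairwise (· < ·)) (hm : ∀ x ∈ l₁, m ≤ x) : l₁ = [] :=
  List.eq_nil_iff_forall_not_mem.2 fun x hx =>
    (hm x hx).not_gt (List.pairwise_append.1 h |>.2.2 x hx m List.mem_cons_self)

theorem runOps_append (w₁ w₂ : List Op) (c : Conf) :
    runOps (w₁ ++ w₂) c = (runOps w₁ c).bind (runOps w₂) := by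
  induction w₁ generalizing c with
  | nil => rfl
  | cons o w ih => simp only [List.cons_append, runOps, ih, Option.bind_assoc]

@[simp]
theorem countOp_nil (o : Op) : countOp [] o = 0 := rfl

@[simp]
theorem countOp_cons (o o' : Op) (w : List Op) :
    countOp (o' :: w) o = countOp w o + if o' = o then 1 else 0 := by
  by_cases h : o' = o <;> simp [countOp, h]

@[elab_as_elim]
theorem runOps_induction {motive : List Op → Conf → Conf → Prop}
    (nil : ∀ c, motive [] c c)
    (push : ∀ x i h v o w c', motive w ⟨i, x :: h, v, o⟩ c' →
      motive (Op.push :: w) ⟨x :: i, h, v, o⟩ c')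
    (lam : ∀ x i h v o w c', motive w ⟨i, h, x :: v, o⟩ c' →
      motive (Op.lam :: w) ⟨i, x :: h, v, o⟩ c')
    (mu : ∀ x i h v o w c', motive w ⟨i, h, v, o ++ [x]⟩ c' →
      motive (Op.mu :: w) ⟨i, h, x :: v, o⟩ c')
    {w : List Op} {c c' : Conf} (hrun : runOps w c = some c') : motive w c c' := by
  induction w generalizing c with
  | nil => cases Option.some.inj hrun; exact nil _
  | cons op w ih =>
    obtain ⟨i, h, v, o⟩ := c
    cases op with
    | push =>
      cases i with
      | nil => simp [runOps, stepOp] at hrun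
      | cons x i => exact push x i h v o w c' (ih hrun)
    | lam =>
      cases h with
      | nil => simp [runOps, stepOp] at hrun
      | cons x h => exact lam x i h v o w c' (ih hrun)
    | mu =>
      cases v with
      | nil => simp [runOps, stepOp] at hrun
      | cons x v => exact mu x i h v o w c' (ih hrun)

theorem runOps_counts {w : List Op} {c c' : Conf} (hrun : runOps w c = some c') :
    c.input.length = c'.input.length + countOp w Op.push ∧
    c'.H.length + countOp w Op.lam = c.H.length + countOp w Op.push ∧
    c'.V.length + countOp w Op.mu = c.V.length + countOp w Op.lam := by
  refine runOps_induction (fun c => by simp) ?_ ?_ ?_ hrun <;>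
    intro x i h v o w c' ih <;> simp at ih ⊢ <;> omega

theorem isStackWord_of_runOps {w : List Op} {σ : List ℤ} {c' : Conf}
    (hrun : runOps w (initConf σ) = some c') : IsStackWord w := by
  rintro p ⟨s, rfl⟩
  rw [runOps_append] at hrun
  obtain ⟨c₁, hp, -⟩ := Option.bind_eq_some_iff.mp hrun
  have := runOps_counts hp
  simp only [initConf, List.length_nil] at this
  omega

theorem runOps_input_frame {w : List Op} {c c' : Conf} (hrun : runOps w c = some c') :
    ∃ d, c.input = d ++ c'.input ∧
      ∀ e, runOps w ⟨d ++ e, c.H, c.V, c.output⟩ = some ⟨e, c'.H, c'.V, c'.output⟩ := by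
  refine runOps_induction (fun c => ⟨[], rfl, fun e => rfl⟩) ?_ ?_ ?_ hrun
  · rintro x i h v o w c' ⟨d, hd, he⟩
    exact ⟨x :: d, congrArg (x :: ·) hd, he⟩
  all_goals rintro x i h v o w c' ⟨d, hd, he⟩; exact ⟨d, hd, he⟩

theorem runOps_output_frame {w : List Op} {c c' : Conf} (hrun : runOps w c = some c') :
    ∃ o₂, c'.output = c.output ++ o₂ ∧
      ∀ pre, runOps w ⟨c.input, c.H, c.V, pre⟩ = some ⟨c'.input, c'.H, c'.V, pre ++ o₂⟩ := by
  refine runOps_induction (fun c => ⟨[], by simp, fun pre => by simp [runOps]⟩) ?_ ?_ ?_ hrun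
  iterate 2 rintro x i h v o w c' ⟨o₂, ho, he⟩; exact ⟨o₂, ho, he⟩
  rintro x i h v o w c' ⟨o₂, ho, he⟩
  exact ⟨x :: o₂, by simp [ho], fun pre => (he (pre ++ [x])).trans (by simp)⟩

theorem runOps_perm {w : List Op} {c c' : Conf} (hrun : runOps w c = some c') :
    (c'.output ++ c'.V ++ c'.H ++ c'.input).Perm (c.output ++ c.V ++ c.H ++ c.input) := by
  refine runOps_induction (fun c => List.Perm.refl _) ?_ ?_ ?_ hrun <;>
    intro x i h v o w c' ih <;> refine ih.trans (List.perm_iff_count.2 fun a => ?_) <;>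
    simp [List.count_cons] <;> omega

theorem push_notMem_of_runOps {w : List Op} {c c' : Conf} (hrun : runOps w c = some c')
    (hc : c.input = []) : Op.push ∉ w := by
  refine runOps_induction (motive := fun w c _ => c.input = [] → Op.push ∉ w)
    (fun _ _ => List.not_mem_nil) ?_ ?_ ?_ hrun hc <;>
    intro x i h v o w c' ih hc <;> simp_all

theorem exists_decorate_of_runOps {w : List Op} {c c' : Conf} (hrun : runOps w c = some c') :
    ∃ d, decorate w c = some d := by
  refine runOps_induction (fun c => ⟨[], rfl⟩) ?_ ?_ ?_ hrun <;>
    rintro x i h v o w c' ⟨d, hd⟩ <;> simp [decorate, hd]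

theorem decorate_append {w₁ : List Op} (w₂ : List Op) {c c' : Conf}
    (hrun : runOps w₁ c = some c') :
    decorate (w₁ ++ w₂) c = (decorate w₁ c).bind fun d₁ => (decorate w₂ c').map (d₁ ++ ·) := by
  refine runOps_induction (fun c => ?_) ?_ ?_ ?_ hrun
  · simp [decorate]
  all_goals
    intro x i h v o w c' ih
    simp only [List.cons_append, decorate, ih]
    cases decorate w _ <;> simp [Function.comp_def]

theorem map_fst_of_decorate_eq_some {w : List Op} {c : Conf} {d : List (Op × ℤ)}
    (hd : decorate w c = some d) : d.map Prod.fst = w := by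
  fun_induction decorate w c generalizing d with
  | case1 => simp_all
  | case5 => simp at hd
  | _ _ _ _ _ _ _ ih => obtain ⟨a, ha, rfl⟩ := Option.map_eq_some_iff.1 hd; simp [ih ha]

theorem mem_take_of_push_mem_decorate {w : List Op} {c : Conf} {d : List (Op × ℤ)} {x : ℤ}
    (hd : decorate w c = some d) (hx : (Op.push, x) ∈ d) :
    x ∈ c.input.take (countOp w Op.push) := by
  fun_induction decorate w c generalizing d with
  | case1 => simp_all
  | case5 => simp at hd
  | case2 _ _ _ _ _ _ ih =>
    obtain ⟨a, ha, rfl⟩ := Option.map_eq_some_iff.1 hd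
    rcases List.mem_cons.1 hx with hx | hx
    · simp_all
    · simpa using .inr (ih ha hx)
  | case3 _ _ _ _ _ _ ih | case4 _ _ _ _ _ _ ih =>
    obtain ⟨a, ha, rfl⟩ := Option.map_eq_some_iff.1 hd
    simpa using ih ha (by simpa using hx)

theorem rtlPositions_pairwise (σ : List ℤ) : (rtlPositions σ).Pairwise (· < ·) :=
  List.pairwise_lt_range.filter _

theorem isRTLMinPos_rtlPos_one {σ : List ℤ} (hr : 1 ≤ rtlCount σ) :
    IsRTLMinPos σ (rtlPos σ 1) := by
  obtain ⟨a, t, ht⟩ := List.exists_cons_of_length_pos hr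
  have ha : a ∈ rtlPositions σ := by simp [ht]
  simp only [rtlPositions, List.mem_filter, decide_eq_true_eq] at ha
  simpa [rtlPos, ht] using ha.2

theorem rtlPos_one_le {σ : List ℤ} {j : ℕ} (hj : IsRTLMinPos σ j) : rtlPos σ 1 ≤ j := by
  have hmem : j ∈ rtlPositions σ := by simp [rtlPositions, hj, hj.1]
  obtain ⟨a, t, ht⟩ := List.exists_cons_of_ne_nil (List.ne_nil_of_mem hmem)
  have hsorted := rtlPositions_pairwise σ
  rw [ht] at hmem hsorted
  simp only [rtlPos, ht, Nat.sub_self, List.getD_cons_zero]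
  rcases List.mem_cons.1 hmem with rfl | h
  · exact le_rfl
  · exact ((List.pairwise_cons.1 hsorted).1 j h).le

theorem getD_rtlPos_one_le {σ : List ℤ} (hr : 1 ≤ rtlCount σ) {x : ℤ} (hx : x ∈ σ) :
    σ.getD (rtlPos σ 1) 0 ≤ x := by
  have hk := isRTLMinPos_rtlPos_one hr
  obtain ⟨j₀, hj₀, hmin⟩ := (Finset.range σ.length).exists_min_image (σ.getD · 0)
    ⟨_, Finset.mem_range.2 hk.1⟩
  have hj₀rtl : IsRTLMinPos σ j₀ :=
    ⟨Finset.mem_range.1 hj₀, fun j hj _ => not_lt.2 (hmin j (Finset.mem_range.2 hj))⟩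
  have hkj₀ : σ.getD (rtlPos σ 1) 0 ≤ σ.getD j₀ 0 := by
    rcases (rtlPos_one_le hj₀rtl).lt_or_eq with hlt | heq
    · exact not_lt.1 (hk.2 j₀ hj₀rtl.1 hlt)
    · rw [heq]
  obtain ⟨j, hj, rfl⟩ := List.getElem_of_mem hx
  refine hkj₀.trans ?_
  rw [← List.getD_eq_getElem _ 0 hj]
  exact hmin j (Finset.mem_range.2 hj)

theorem sigmaUp_one_eq_take {σ : List ℤ} (hσ : σ.Nodup) (hr : 1 ≤ rtlCount σ) :
    sigmaUp σ 1 = σ.take (rtlPos σ 1) := by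
  have hk := (isRTLMinPos_rtlPos_one hr).1
  refine List.filter_eq_self.2 fun x hx => decide_eq_true ?_
  obtain ⟨j, hj, rfl⟩ := List.mem_take_iff_getElem.1 hx
  refine lt_of_le_of_ne (getD_rtlPos_one_le hr (List.getElem_mem _)) fun heq => ?_
  rw [List.getD_eq_getElem _ _ hk, hσ.getElem_inj_iff] at heq
  omega

theorem take_rtlPos_one_add_one {σ : List ℤ} (hσ : σ.Nodup) (hr : 1 ≤ rtlCount σ) :
    σ.take (rtlPos σ 1 + 1) = sigmaUp σ 1 ++ [σ.getD (rtlPos σ 1) 0] := by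
  have hk := (isRTLMinPos_rtlPos_one hr).1
  rw [sigmaUp_one_eq_take hσ hr, List.take_add_one, List.getElem?_eq_getElem hk,
    List.getD_eq_getElem _ _ hk, Option.toList_some]

theorem length_sigmaUp_one {σ : List ℤ} (hσ : σ.Nodup) (hr : 1 ≤ rtlCount σ) :
    (sigmaUp σ 1).length = rtlPos σ 1 := by
  have hk := (isRTLMinPos_rtlPos_one hr).1
  rw [sigmaUp_one_eq_take hσ hr, List.length_take]
  omega

theorem rtlPositions_append_singleton {τ : List ℤ} {m : ℤ} (hm : ∀ x ∈ τ, m < x) :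
    rtlPositions (τ ++ [m]) = [τ.length] := by
  have hlast : (τ ++ [m]).getD τ.length 0 = m := by simp
  unfold rtlPositions
  rw [List.length_append, List.length_singleton, List.range_succ, List.filter_append,
    List.filter_eq_nil_iff.2 fun k hk => ?_]
  · simp only [List.nil_append, List.filter_singleton, List.length_append,
      List.length_singleton, IsRTLMinPos]
    simp only [lt_add_iff_pos_right, zero_lt_one, true_and]
    rw [decide_eq_true fun j hj hlt => absurd hj (by omega), cond_true]
  · have hk : k < τ.length := List.mem_range.1 hk
    refine fun hrtl => (of_decide_eq_true hrtl).2 τ.length (by simp) hk ?_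
    rw [hlast, List.getD_eq_getElem _ _ (by simp; omega), List.getElem_append_left hk]
    exact hm _ (List.getElem_mem _)

theorem satisfiesP_one_append_singleton_iff {τ : List ℤ} {m : ℤ} (hm : ∀ x ∈ τ, m < x)
    (dw : List (Op × ℤ)) :
    SatisfiesP (τ ++ [m]) dw 1 ↔
      ∃ d₁ d₂, dw = d₁ ++ (Op.push, m) :: (Op.lam, m) :: (Op.mu, m) :: d₂ := by
  have hpos : rtlPos (τ ++ [m]) 1 = τ.length := by
    simp [rtlPos, rtlPositions_append_singleton hm]
  have hcount : rtlCount (τ ++ [m]) = 1 := by simp [rtlCount, rtlPositions_append_singleton hm]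
  have hlast : (τ ++ [m]).getD τ.length 0 = m := by simp
  rw [SatisfiesP, hpos, hlast, hcount]
  refine ⟨fun h => h.1, fun h => ⟨h, fun x hx hlt => ?_, fun h => absurd h (lt_irrefl 1)⟩⟩
  rcases List.mem_append.1 hx with hx | hx
  · exact absurd (hm x hx) hlt.asymm
  · exact absurd (List.mem_singleton.1 hx ▸ hlt) (lt_irrefl m)

/-- The `P₁`-stack configurations of `τ ++ [m]` when `m` is below every entry of `τ`: then `m` is
the only right-to-left minimum and `(P₁)` reduces to its factor condition (i). -/
def P1Config (τ : List ℤ) (m : ℤ) (c : SConf) : Prop :=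
  ∃ (w u : List Op) (dw : List (Op × ℤ)),
    u.head? = some Op.push ∧
    countOp w Op.push = τ.length ∧
    ReachesConf (τ ++ [m]) w c ∧
    SortsTo (τ ++ [m]) (w ++ u) ∧
    decorate (w ++ u) (initConf (τ ++ [m])) = some dw ∧
    ∃ d₁ d₂, dw = d₁ ++ (Op.push, m) :: (Op.lam, m) :: (Op.mu, m) :: d₂

theorem piConfig_one_iff {σ τ : List ℤ} {m : ℤ} (hm : ∀ x ∈ τ, m < x)
    (hsplit : σ.take (rtlPos σ 1 + 1) = τ ++ [m]) (hk : rtlPos σ 1 = τ.length) (c : SConf) :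
    PiConfig σ 1 c ↔ P1Config τ m c := by
  have hone : ∀ P : ℕ → Prop, (∀ l, 1 ≤ l → l ≤ 1 → P l) ↔ P 1 :=
    fun P => ⟨fun h => h 1 le_rfl le_rfl, fun h l h₁ h₂ => le_antisymm h₂ h₁ ▸ h⟩
  simp only [PiConfig, hsplit]
  simp only [P1Config, hk, hone, satisfiesP_one_append_singleton_iff hm]

theorem eq_lam_mu_of_decorate_eq_factor {τ : List ℤ} {m : ℤ} (hm : ∀ x ∈ τ, m < x)
    {w u : List Op} {h v o : List ℤ} {d₁ d₂ : List (Op × ℤ)}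
    (hw : countOp w Op.push = τ.length)
    (hrun : runOps w (initConf (τ ++ [m])) = some ⟨[m], h, v, o⟩)
    (hdec : decorate (w ++ Op.push :: u) (initConf (τ ++ [m])) =
      some (d₁ ++ (Op.push, m) :: (Op.lam, m) :: (Op.mu, m) :: d₂)) :
    u = Op.lam :: Op.mu :: d₂.map Prod.fst := by
  obtain ⟨dw, hdw⟩ := exists_decorate_of_runOps hrun
  rw [decorate_append _ hrun, hdw] at hdec
  simp only [Option.bind_some, decorate, Option.map_map] at hdec
  obtain ⟨du, hdu, hdec⟩ := Option.map_eq_some_iff.1 hdec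
  have hdw_not : (Op.push, m) ∉ dw := fun hmem => by
    have := mem_take_of_push_mem_decorate hdw hmem
    simp only [initConf, hw, List.take_left'] at this
    exact lt_irrefl m (hm m this)
  have hdu_not : (Op.push, m) ∉ du := fun hmem => by
    simpa using mem_take_of_push_mem_decorate hdu hmem
  obtain ⟨-, -, rfl⟩ := (List.append_cons_inj_of_notMem hdw_not hdu_not).1 hdec
  simpa using (map_fst_of_decorate_eq_some hdu).symm

theorem P1Config.isPushall {τ : List ℤ} {m : ℤ} {c : SConf} (hm : ∀ x ∈ τ, m < x)
    (hc : P1Config τ m c) : IsPushall τ c := by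
  obtain ⟨w, u, dw, hu, hw, ⟨inp, out₀, hrunw⟩, ⟨out, hrun, hsorted, hperm⟩, hdec, d₁, d₂, rfl⟩ :=
    hc
  obtain ⟨d, hsplit, hframe⟩ := runOps_input_frame hrunw
  have hinp : inp.length = 1 := by
    have := (runOps_counts hrunw).1
    simp only [initConf, List.length_append, List.length_singleton, hw] at this
    omega
  obtain ⟨rfl, rfl⟩ := List.append_inj' hsplit (by simpa using hinp.symm)
  obtain ⟨u, rfl⟩ : ∃ u', u = Op.push :: u' := by
    cases u <;> simp_all
  obtain rfl := eq_lam_mu_of_decorate_eq_factor hm hw hrunw hdec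
  rw [runOps_append, hrunw] at hrun
  simp only [Option.bind_some, runOps, stepOp] at hrun
  obtain ⟨o₂, ho₂ : out = out₀ ++ [m] ++ o₂, hpop⟩ := runOps_output_frame hrun
  have hmin : ∀ x ∈ out, m ≤ x := fun x hx => by
    rcases List.mem_append.1 (hperm.subset hx) with hx | hx
    · exact (hm x hx).le
    · exact (List.mem_singleton.1 hx).ge
  obtain rfl : out₀ = [] := List.eq_nil_of_pairwise_lt_append_cons (l₂ := o₂)
    (by simpa [ho₂] using hsorted) fun x hx => hmin x (by simp [ho₂, hx])
  have hrunτ : runOps w (initConf τ) = some ⟨[], c.H, c.V, []⟩ := by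
    simpa [initConf] using hframe []
  refine ⟨⟨_, o₂, push_notMem_of_runOps hrun rfl, by simpa using hpop [], ?_⟩, ?_,
    w, isStackWord_of_runOps hrunτ, [], [], hrunτ⟩
  · simp only [ho₂, List.nil_append, List.singleton_append] at hsorted
    exact (List.pairwise_cons.1 hsorted).2
  · simpa [TotalFor, SConf.elems, initConf] using runOps_perm hrunτ

theorem P1Config.of_isPushall {τ : List ℤ} {m : ℤ} {c : SConf} (hm : ∀ x ∈ τ, m < x)
    (hc : IsPushall τ c) : P1Config τ m c := by
  obtain ⟨⟨wp, rest, -, hrunp, hsorted⟩, htot, w, -, inp, out₀, hrunw⟩ := hc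
  replace htot : (c.V ++ c.H).Perm τ := htot
  obtain ⟨rfl, rfl⟩ : out₀ = [] ∧ inp = [] := by
    have h₁ := (runOps_perm hrunw).length_eq
    have h₂ := htot.length_eq
    simp only [initConf, List.length_append, List.length_nil] at h₁ h₂
    exact ⟨List.length_eq_zero_iff.1 (by omega), List.length_eq_zero_iff.1 (by omega)⟩
  obtain ⟨d, hd, hframe⟩ := runOps_input_frame hrunw
  have hdτ : d = τ := by simpa [initConf] using hd.symm
  subst d
  have hrunw' : runOps w (initConf (τ ++ [m])) = some ⟨[m], c.H, c.V, []⟩ := hframe [m]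
  have hw : countOp w Op.push = τ.length := by
    have := (runOps_counts hrunw).1
    simp only [initConf, List.length_nil] at this
    omega
  have hrest : rest.Perm τ := by
    simpa using (runOps_perm hrunp).trans (by simpa using htot)
  obtain ⟨o₂, ho₂ : rest = [] ++ o₂, hpop⟩ := runOps_output_frame hrunp
  rw [List.nil_append] at ho₂
  subst ho₂
  have hrun : runOps (w ++ Op.push :: Op.lam :: Op.mu :: wp) (initConf (τ ++ [m])) =
      some ⟨[], [], [], m :: rest⟩ := by
    rw [runOps_append, hrunw']
    simpa [runOps, stepOp] using hpop [m]
  obtain ⟨dw, hdw⟩ := exists_decorate_of_runOps hrunw'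
  obtain ⟨dp, hdp⟩ := exists_decorate_of_runOps (hpop [m])
  refine ⟨w, Op.push :: Op.lam :: Op.mu :: wp,
    dw ++ (Op.push, m) :: (Op.lam, m) :: (Op.mu, m) :: dp, rfl, hw, ⟨[m], [], hrunw'⟩,
    ⟨m :: rest, hrun, List.pairwise_cons.2 ⟨fun x hx => hm x (hrest.subset hx), hsorted⟩,
      (hrest.cons m).trans (List.perm_append_singleton m τ).symm⟩, ?_, dw, dp, rfl⟩
  rw [decorate_append _ hrunw', hdw]
  simp [decorate, hdp]

/-- The set of `P_1`-stack configurations of `σ` is exactly the set of pushall stack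
configurations of `σ^{(1)}`. -/
theorem P1Config_iff_pushall (σ : List ℤ) (hσ : σ.Nodup) (hr : 1 ≤ rtlCount σ) :
    ∀ c : SConf, PiConfig σ 1 c ↔ IsPushall (sigmaUp σ 1) c := by
  intro c
  have hm : ∀ x ∈ sigmaUp σ 1, σ.getD (rtlPos σ 1) 0 < x := fun x hx =>
    of_decide_eq_true (List.mem_filter.1 hx).2
  rw [piConfig_one_iff hm (take_rtlPos_one_add_one hσ hr) (length_sigmaUp_one hσ hr).symm]
  exact ⟨P1Config.isPushall hm, P1Config.of_isPushall hm⟩
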